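/- Let V be a real vector space of odd dimension 2n+1 with dual V*, and consider W = V ⊕ V* with its canonical split pairing. Let E ⊆ W be a 2-dimensional subspace with nondegenerate pairing of signature (1,1), and let L ⊆ (E^⊥) ⊗ ℂ be a maximal isotropic subspace with L ∩ conj(L) = 0. Set p_E = dim a(E) and t_L = codim_ℂ a(L) in V ⊗ ℂ, where a is the projection to the tangent factor. Then either p_E = 1 and 1 ≤ t_L ≤ n+1, or p_E = 2 and 1 ≤ t_L ≤ n. -/

import Mathlib

set_option maxSynthPendingDepth 3
noncomputable section
open Module

/-- The canonical split pairing `⟨x+ξ, y+η⟩ = (ξ(y)+η(x))/2` on `V ⊕ V*`. -/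
def pairW (V : Type*) [AddCommGroup V] [Module ℝ V] :
    LinearMap.BilinForm ℝ (V × Module.Dual ℝ V) :=
  LinearMap.mk₂ ℝ (fun x y => (x.2 y.1 + y.2 x.1) / 2)
    (by intros; simp [Prod.fst_add, Prod.snd_add]; ring)
    (by intros; simp [smul_eq_mul]; ring)
    (by intros; simp [Prod.fst_add, Prod.snd_add]; ring)
    (by intros; simp [smul_eq_mul]; ring)

open scoped TensorProduct

/-!
Let `K = L ∩ ker a`. By rank–nullity `dim a(L) = 2n - dim K`, so `t_L = 1 + dim K`. The
space `K` lies in the complexification of the real space `E^⊥ ∩ ker a = 0 ⊕ ann(a(E))`, of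
dimension `2n + 1 - p_E`, and `K ∩ conj K ⊆ L ∩ conj L = 0`; as `K` and `conj K` are then
independent subspaces of that complexification, `2 dim K ≤ 2n + 1 - p_E`. Finally
`1 ≤ p_E ≤ 2`: `a(E)` is spanned by the tangent parts of two vectors of `E` that pair
nontrivially, so they cannot both vanish.
-/

section BaseChange
variable {R A M N : Type*} [CommRing R] [CommRing A] [Algebra R A]
  [AddCommGroup M] [Module R M] [AddCommGroup N] [Module R N]

theorem LinearMap.ker_baseChange [Module.Flat R A] (f : M →ₗ[R] N) :
    LinearMap.ker (f.baseChange A) = (LinearMap.ker f).baseChange A :=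
  Module.Flat.ker_lTensor_eq A A f

theorem LinearMap.range_baseChange_le {f : M →ₗ[R] N} {q : Submodule R N}
    (h : LinearMap.range f ≤ q) :
    LinearMap.range (f.baseChange A) ≤ q.baseChange A := by
  have : f = q.subtype ∘ₗ f.codRestrict q (fun m => h ⟨m, rfl⟩) := rfl
  rw [this, LinearMap.baseChange_comp]
  exact LinearMap.range_comp_le_range _ _

theorem Submodule.baseChange_inf [Module.Flat R A] (p q : Submodule R M) :
    (p ⊓ q).baseChange A = p.baseChange A ⊓ q.baseChange A := by
  refine le_antisymm (le_inf (baseChange_mono A inf_le_left) (baseChange_mono A inf_le_right)) ?_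
  rintro _ ⟨⟨y, rfl⟩, hq⟩
  rw [SetLike.mem_coe, ← q.ker_mkQ, ← LinearMap.ker_baseChange, LinearMap.mem_ker,
    ← LinearMap.comp_apply, ← LinearMap.baseChange_comp, ← LinearMap.mem_ker,
    LinearMap.ker_baseChange] at hq
  obtain ⟨z, rfl⟩ := hq
  rw [← LinearMap.comp_apply, ← LinearMap.baseChange_comp]
  refine LinearMap.range_baseChange_le ?_ (LinearMap.mem_range_self _ z)
  rintro _ ⟨⟨x, hx⟩, rfl⟩
  exact ⟨x.2, by simpa using hx⟩

end BaseChange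

theorem Submodule.finrank_restrictScalars {F E N : Type*} [Field F] [Field E] [Algebra F E]
    [AddCommGroup N] [Module E N] [Module F N] [IsScalarTower F E N] (K : Submodule E N) :
    finrank F (K.restrictScalars F) = finrank F E * finrank E K :=
  (Module.finrank_mul_finrank F E K).symm

theorem Submodule.finrank_baseChange {F K M : Type*} [Field F] [Field K] [Algebra F K]
    [AddCommGroup M] [Module F M] (P : Submodule F M) :
    finrank K (P.baseChange K) = finrank F P := by
  rw [← (Submodule.toBaseChange.toLinearEquiv K P).finrank_eq, Module.finrank_baseChange]

theorem Submodule.finrank_map_add_finrank_inf_ker {K V W : Type*} [DivisionRing K]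
    [AddCommGroup V] [Module K V] [AddCommGroup W] [Module K W]
    (f : V →ₗ[K] W) (L : Submodule K V) [FiniteDimensional K L] :
    finrank K (L.map f) + finrank K ↥(L ⊓ LinearMap.ker f) = finrank K L := by
  have hker : (L ⊓ LinearMap.ker f).comap L.subtype = LinearMap.ker (f.domRestrict L) := by
    rw [LinearMap.ker_domRestrict, Submodule.comap_inf, Submodule.comap_subtype_self, top_inf_eq]
  rw [← (Submodule.comapSubtypeEquivOfLe inf_le_left).finrank_eq, hker,
    ← LinearMap.range_domRestrict]
  exact LinearMap.finrank_range_add_finrank_ker _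

section Conj
variable {M N : Type*} [AddCommGroup M] [Module ℝ M] [AddCommGroup N] [Module ℝ N]

variable (M) in
def conjTensor : ℂ ⊗[ℝ] M →ₗ[ℝ] ℂ ⊗[ℝ] M :=
  TensorProduct.map Complex.conjAe.toLinearMap LinearMap.id

theorem conjTensor_involutive : Function.Involutive (conjTensor M) := by
  intro x
  induction x with
  | zero => simp
  | tmul c m => simp [conjTensor]
  | add x y hx hy => simp only [map_add, hx, hy]

theorem conjTensor_baseChange (f : M →ₗ[ℝ] N) (x : ℂ ⊗[ℝ] M) :
    f.baseChange ℂ (conjTensor M x) = conjTensor N (f.baseChange ℂ x) := by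
  induction x with
  | zero => simp
  | tmul c m => simp [conjTensor]
  | add x y hx hy => simp only [map_add, hx, hy]

theorem conjTensor_mem_baseChange {P : Submodule ℝ M} {x : ℂ ⊗[ℝ] M}
    (hx : x ∈ P.baseChange ℂ) : conjTensor M x ∈ P.baseChange ℂ := by
  obtain ⟨y, rfl⟩ := hx
  exact ⟨conjTensor P y, conjTensor_baseChange P.subtype y⟩

theorem two_mul_finrank_le_of_conj_disjoint {P : Submodule ℝ M} [FiniteDimensional ℝ P]
    {K : Submodule ℂ (ℂ ⊗[ℝ] M)} (hKP : K ≤ P.baseChange ℂ)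
    (hK : ∀ x ∈ K, conjTensor M x ∈ K → x = 0) :
    2 * finrank ℂ K ≤ finrank ℝ P := by
  have : FiniteDimensional ℂ (P.baseChange ℂ) :=
    (Submodule.toBaseChange.toLinearEquiv ℂ P).finiteDimensional
  have : FiniteDimensional ℂ K := Submodule.finiteDimensional_of_le hKP
  have (Q : Submodule ℂ (ℂ ⊗[ℝ] M)) [FiniteDimensional ℂ Q] :
      FiniteDimensional ℝ (Q.restrictScalars ℝ) :=
    FiniteDimensional.complexToReal Q
  let σ := LinearEquiv.ofInvolutive (conjTensor M) conjTensor_involutive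
  set Kr := K.restrictScalars ℝ
  have hdisj : Kr ⊓ Kr.map σ.toLinearMap = ⊥ := by
    refine eq_bot_iff.mpr fun x ⟨hx, y, hy, hyx⟩ => (Submodule.mem_bot ℝ).mpr ?_
    subst hyx
    exact hK _ hx (by simpa [σ, Kr, conjTensor_involutive y] using hy)
  have hsup : Kr ⊔ Kr.map σ.toLinearMap ≤ (P.baseChange ℂ).restrictScalars ℝ :=
    sup_le hKP (Submodule.map_le_iff_le_comap.mpr fun y hy => conjTensor_mem_baseChange (hKP hy))
  have hdim := Submodule.finrank_sup_add_finrank_inf_eq Kr (Kr.map σ.toLinearMap)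
  rw [hdisj, finrank_bot, LinearEquiv.finrank_map_eq] at hdim
  have hle := Submodule.finrank_mono hsup
  rw [Submodule.finrank_restrictScalars, Complex.finrank_real_complex] at hdim
  rw [Submodule.finrank_restrictScalars, Submodule.finrank_baseChange,
    Complex.finrank_real_complex] at hle
  omega

end Conj

section SplitPairing
variable {V : Type*} [AddCommGroup V] [Module ℝ V]

theorem pairW_apply (x y : V × Dual ℝ V) : pairW V x y = (x.2 y.1 + y.2 x.1) / 2 := rfl

theorem pairW_orthogonal_inf_ker_fst (E : Submodule ℝ (V × Dual ℝ V)) :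
    (pairW V).orthogonal E ⊓ LinearMap.ker (LinearMap.fst ℝ V (Dual ℝ V)) =
      (E.map (LinearMap.fst ℝ V _)).dualAnnihilator.map (LinearMap.inr ℝ V (Dual ℝ V)) := by
  ext ⟨x, ξ⟩
  simp only [Submodule.mem_inf, LinearMap.BilinForm.mem_orthogonal_iff, LinearMap.mem_ker,
    LinearMap.fst_apply, Submodule.mem_map, Submodule.mem_dualAnnihilator, LinearMap.coe_inr]
  constructor
  · rintro ⟨horth, rfl⟩
    refine ⟨ξ, ?_, rfl⟩
    rintro _ ⟨e, he, rfl⟩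
    simpa [pairW_apply] using horth e he
  · rintro ⟨η, hη, hxξ⟩
    obtain ⟨rfl, rfl⟩ := Prod.mk.inj hxξ
    refine ⟨fun e he => ?_, rfl⟩
    simp [pairW_apply, hη e.1 ⟨e, he, rfl⟩]

theorem finrank_pairW_orthogonal_inf_ker_fst_add [FiniteDimensional ℝ V]
    (E : Submodule ℝ (V × Dual ℝ V)) :
    finrank ℝ ↥((pairW V).orthogonal E ⊓ LinearMap.ker (LinearMap.fst ℝ V (Dual ℝ V))) +
      finrank ℝ (E.map (LinearMap.fst ℝ V (Dual ℝ V))) = finrank ℝ V := by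
  rw [pairW_orthogonal_inf_ker_fst, add_comm, ← (Submodule.equivMapOfInjective _
    (LinearMap.inr_injective) _).finrank_eq]
  exact Subspace.finrank_add_finrank_dualAnnihilator_eq _

theorem finrank_map_fst_pos_of_pairW_ne_zero [FiniteDimensional ℝ V]
    {E : Submodule ℝ (V × Dual ℝ V)} {u v : V × Dual ℝ V} (hu : u ∈ E) (hv : v ∈ E)
    (huv : pairW V u v ≠ 0) :
    0 < finrank ℝ (E.map (LinearMap.fst ℝ V (Dual ℝ V))) := by
  refine Nat.pos_of_ne_zero fun h => huv ?_
  rw [Submodule.finrank_eq_zero] at h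
  have hu1 : u.1 = 0 := by simpa [h] using Submodule.mem_map_of_mem (f := LinearMap.fst ℝ V _) hu
  have hv1 : v.1 = 0 := by simpa [h] using Submodule.mem_map_of_mem (f := LinearMap.fst ℝ V _) hv
  simp [pairW_apply, hu1, hv1]

end SplitPairing

theorem geometric_type_bounds_general
    (n : ℕ) (V : Type*) [AddCommGroup V] [Module ℝ V] [FiniteDimensional ℝ V]
    (hdim : Module.finrank ℝ V = 2*n+1)
    (E : Submodule ℝ (V × Module.Dual ℝ V))
    -- the restriction of the pairing to `E` is nondegenerate of signature (1,1):
    (hsig : ∃ u v : V × Module.Dual ℝ V, u ∈ E ∧ v ∈ E ∧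
      pairW V u u = 0 ∧ pairW V v v = 0 ∧ pairW V u v = 1/2 ∧
      E = Submodule.span ℝ {u, v})
    (L : Submodule ℂ (ℂ ⊗[ℝ] (V × Module.Dual ℝ V)))
    -- `L` lies in `E^⊥ ⊗ ℂ`:
    (hLperp : L ≤ Submodule.baseChange ℂ ((pairW V).orthogonal E))
    (hLmax : Module.finrank ℂ L = 2*n)
    -- `L ∩ conj(L) = 0`:
    (hLconj : ∀ x ∈ L,
      (TensorProduct.map Complex.conjAe.toLinearMap
        (LinearMap.id : (V × Module.Dual ℝ V) →ₗ[ℝ] _)) x ∈ L → x = 0) :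
    -- with `p_E = dim a(E)` and `t_L = codim_ℂ a(L)`:
    (Module.finrank ℝ (E.map (LinearMap.fst ℝ V (Module.Dual ℝ V))) = 1 ∧
        1 ≤ (2*n+1) - Module.finrank ℂ
          (L.map ((LinearMap.fst ℝ V (Module.Dual ℝ V)).baseChange ℂ)) ∧
        (2*n+1) - Module.finrank ℂ
          (L.map ((LinearMap.fst ℝ V (Module.Dual ℝ V)).baseChange ℂ)) ≤ n+1)
    ∨
    (Module.finrank ℝ (E.map (LinearMap.fst ℝ V (Module.Dual ℝ V))) = 2 ∧
        1 ≤ (2*n+1) - Module.finrank ℂ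
          (L.map ((LinearMap.fst ℝ V (Module.Dual ℝ V)).baseChange ℂ)) ∧
        (2*n+1) - Module.finrank ℂ
          (L.map ((LinearMap.fst ℝ V (Module.Dual ℝ V)).baseChange ℂ)) ≤ n) := by
  obtain ⟨u, v, huE, hvE, -, -, huv, hE⟩ := hsig
  set a := LinearMap.fst ℝ V (Module.Dual ℝ V)
  set P := (pairW V).orthogonal E ⊓ LinearMap.ker a
  set K := L ⊓ LinearMap.ker (a.baseChange ℂ)
  have hP : finrank ℝ P + finrank ℝ (E.map a) = 2 * n + 1 :=
    hdim ▸ finrank_pairW_orthogonal_inf_ker_fst_add E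
  have hpos : 0 < finrank ℝ (E.map a) :=
    finrank_map_fst_pos_of_pairW_ne_zero huE hvE (by rw [huv]; norm_num)
  have hle_two : finrank ℝ (E.map a) ≤ 2 := by
    classical
    rw [hE, Submodule.map_span, Set.image_pair, ← Finset.coe_pair]
    exact (finrank_span_finset_le_card _).trans Finset.card_le_two
  have hKP : K ≤ P.baseChange ℂ := by
    rw [Submodule.baseChange_inf, ← LinearMap.ker_baseChange]
    exact inf_le_inf_right _ hLperp
  have hK : 2 * finrank ℂ K ≤ finrank ℝ P :=
    two_mul_finrank_le_of_conj_disjoint hKP fun x hx hcx => hLconj x hx.1 hcx.1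
  have hL : finrank ℂ (L.map (a.baseChange ℂ)) + finrank ℂ K = 2 * n :=
    hLmax ▸ Submodule.finrank_map_add_finrank_inf_ker _ L
  omega

/-- bounds on the geometric type `(p_E, t_L)` of a generalized almost
contact structure on a `(2n+1)`-dimensional space. -/
theorem geometric_type_bounds
    (n : ℕ) (V : Type*) [AddCommGroup V] [Module ℝ V] [FiniteDimensional ℝ V]
    (hdim : Module.finrank ℝ V = 2*n+1)
    (E : Submodule ℝ (V × Module.Dual ℝ V))
    -- the restriction of the pairing to `E` is nondegenerate of signature (1,1):
    (hsig : ∃ u v : V × Module.Dual ℝ V, u ∈ E ∧ v ∈ E ∧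
      pairW V u u = 0 ∧ pairW V v v = 0 ∧ pairW V u v = 1/2 ∧
      E = Submodule.span ℝ {u, v})
    (L : Submodule ℂ (ℂ ⊗[ℝ] (V × Module.Dual ℝ V)))
    -- `L` lies in `E^⊥ ⊗ ℂ`:
    (hLperp : L ≤ Submodule.baseChange ℂ ((pairW V).orthogonal E))
    -- `L` is isotropic of maximal dimension `2n`:
    (hLiso : ∀ u ∈ L, ∀ v ∈ L, ((pairW V).baseChange ℂ) u v = 0)
    (hLmax : Module.finrank ℂ L = 2*n)
    -- `L ∩ conj(L) = 0`:
    (hLconj : ∀ x ∈ L,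
      (TensorProduct.map Complex.conjAe.toLinearMap
        (LinearMap.id : (V × Module.Dual ℝ V) →ₗ[ℝ] _)) x ∈ L → x = 0) :
    -- with `p_E = dim a(E)` and `t_L = codim_ℂ a(L)`:
    (Module.finrank ℝ (E.map (LinearMap.fst ℝ V (Module.Dual ℝ V))) = 1 ∧
        1 ≤ (2*n+1) - Module.finrank ℂ
          (L.map ((LinearMap.fst ℝ V (Module.Dual ℝ V)).baseChange ℂ)) ∧
        (2*n+1) - Module.finrank ℂ
          (L.map ((LinearMap.fst ℝ V (Module.Dual ℝ V)).baseChange ℂ)) ≤ n+1)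
    ∨
    (Module.finrank ℝ (E.map (LinearMap.fst ℝ V (Module.Dual ℝ V))) = 2 ∧
        1 ≤ (2*n+1) - Module.finrank ℂ
          (L.map ((LinearMap.fst ℝ V (Module.Dual ℝ V)).baseChange ℂ)) ∧
        (2*n+1) - Module.finrank ℂ
          (L.map ((LinearMap.fst ℝ V (Module.Dual ℝ V)).baseChange ℂ)) ≤ n) :=
  geometric_type_bounds_general n V hdim E hsig L hLperp hLmax hLconj
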